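/- arXiv:2105.13293 — 4 statements merged into one kernel-verified Lean document; each statement's English description precedes it below -/
import Mathlib

section
/- Let h : ℝ → ℝ be a continuous function with |h(s)| ≤ C for all s ∈ ℝ and C > 0, and define for λ = u + iv with v ≠ 0 the function F(λ) = −(1/(2πi)) ∫_ℝ h(s)/(s − λ) ds and δ(λ) = exp(−F(λ)). Then |δ(λ)| ≤ e^{C/2} for all λ with Im λ ≠ 0. -/
/-! `Re (−F λ) = Im (∫ h(s)/(s − λ) ds) / (2π)`, and `Im (1/(s − λ))` is `± π` times the density
of the Cauchy distribution with location `Re λ` and scale `|Im λ|`. Since that density integrates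
to `1`, `|h| ≤ C` gives `Re (−F λ) ≤ Cπ / (2π) = C/2`. -/

open MeasureTheory ProbabilityTheory Real

lemma Complex.im_div_ofReal_sub (a s : ℝ) (z : ℂ) :
    ((a : ℂ) / ((s : ℂ) - z)).im = a * z.im / ((s - z.re) ^ 2 + z.im ^ 2) := by
  simp only [Complex.div_im, Complex.normSq_apply, Complex.sub_re, Complex.sub_im,
    Complex.ofReal_re, Complex.ofReal_im]
  ring

lemma Complex.re_div_two_pi_I (w : ℂ) : (w / (2 * π * Complex.I)).re = w.im / (2 * π) := by
  simp only [Complex.div_re, Complex.mul_re, Complex.mul_im, Complex.re_ofNat, Complex.im_ofNat,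
    Complex.ofReal_re, Complex.ofReal_im, Complex.I_re, Complex.I_im, Complex.normSq_apply,
    mul_zero, zero_mul, mul_one, sub_zero, add_zero, zero_add, sub_self, zero_div]
  field_simp

lemma Complex.im_div_ofReal_sub_le {a C : ℝ} (ha : |a| ≤ C) (s : ℝ) (z : ℂ) :
    ((a : ℂ) / ((s : ℂ) - z)).im ≤ C * π * cauchyPDFReal z.re (Real.nnabs z.im) s := by
  rw [Complex.im_div_ofReal_sub, cauchyPDFReal_def, Real.coe_nnabs, ← sq_abs z.im]
  calc a * z.im / ((s - z.re) ^ 2 + |z.im| ^ 2)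
      ≤ C * |z.im| / ((s - z.re) ^ 2 + |z.im| ^ 2) := by
        refine div_le_div_of_nonneg_right ?_ (by positivity)
        calc a * z.im ≤ |a| * |z.im| := by rw [← abs_mul]; exact le_abs_self _
          _ ≤ C * |z.im| := by gcongr
    _ = C * π * (π⁻¹ * |z.im| * ((s - z.re) ^ 2 + |z.im| ^ 2)⁻¹) := by
        field_simp

lemma im_integral_div_ofReal_sub_le {h : ℝ → ℝ} {C : ℝ} (hb : ∀ s, |h s| ≤ C) (z : ℂ) :
    (∫ s : ℝ, (h s : ℂ) / ((s : ℂ) - z)).im ≤ C * π := by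
  have hC : 0 ≤ C * π := mul_nonneg ((abs_nonneg _).trans (hb 0)) pi_pos.le
  by_cases hi : Integrable (fun s : ℝ => (h s : ℂ) / ((s : ℂ) - z))
  · calc (∫ s : ℝ, (h s : ℂ) / ((s : ℂ) - z)).im
        = ∫ s, ((h s : ℂ) / ((s : ℂ) - z)).im := (integral_im hi).symm
      _ ≤ ∫ s, C * π * cauchyPDFReal z.re (Real.nnabs z.im) s :=
          integral_mono hi.im ((integrable_cauchyPDFReal _).const_mul _)
            fun s => Complex.im_div_ofReal_sub_le (hb s) s z
      _ ≤ C * π := by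
        by_cases hz : Real.nnabs z.im = 0
        · simpa [hz] using hC
        · rw [integral_const_mul, integral_cauchyPDFReal_eq_one _ hz, mul_one]
  · rw [integral_undef hi, Complex.zero_im]
    exact hC

theorem stmt4_general (h : ℝ → ℝ) (C : ℝ)
    (hb : ∀ s : ℝ, |h s| ≤ C) :
    ∀ lam : ℂ, lam.im ≠ 0 →
      ‖Complex.exp (-(-(1 / (2 * (Real.pi : ℂ) * Complex.I)) *
        ∫ s : ℝ, (h s : ℂ) / ((s : ℂ) - lam)))‖ ≤ Real.exp (C / 2) := by
  intro lam _
  rw [Complex.norm_exp, Real.exp_le_exp, neg_mul, neg_neg, one_div_mul_eq_div,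
    Complex.re_div_two_pi_I, div_le_iff₀ (by positivity)]
  calc (∫ s : ℝ, (h s : ℂ) / ((s : ℂ) - lam)).im ≤ C * π := im_integral_div_ofReal_sub_le hb lam
    _ = C / 2 * (2 * π) := by ring

/-- For `h` continuous with `|h| ≤ C`, setting
`F(λ) = −(1/(2πi)) ∫_ℝ h(s)/(s − λ) ds` and `δ(λ) = exp(−F(λ))`,
we have `|δ(λ)| ≤ e^{C/2}` whenever `Im λ ≠ 0`. -/
theorem stmt4 (h : ℝ → ℝ) (hc : Continuous h) (C : ℝ) (hC : 0 < C)
    (hb : ∀ s : ℝ, |h s| ≤ C) :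
    ∀ lam : ℂ, lam.im ≠ 0 →
      ‖Complex.exp (-(-(1 / (2 * (Real.pi : ℂ) * Complex.I)) *
        ∫ s : ℝ, (h s : ℂ) / ((s : ℂ) - lam)))‖ ≤ Real.exp (C / 2) :=
  stmt4_general h C hb
end

section
/- Consider the first-order ODE system for complex-valued functions y, s, U of a complex variable X: y′ = −2s, X s′ = s − 2Xy + 4yU, X U′ = U − 4X yU/s + 4 yU²/s (valid where s ≠ 0, X ≠ 0). Then the quantity J(X) := U(X)(U(X) − X)/s(X)² is constant along any solution. -/
/-- Along the system, `X s' = s + 2y(2U - X)` and `X U' = U + 4yU(U - X)/s`; in the numerator of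
the quotient rule for `U(U - X)/s²` the `y`-terms cancel, and what remains is
`sU((2U - X) - X - 2(U - X)) = 0`. -/
theorem hasDerivAt_mul_sub_div_sq_of_painleveIII {𝕜 : Type*} [NontriviallyNormedField 𝕜]
    {s U : 𝕜 → 𝕜} {x y : 𝕜} (hx : x ≠ 0) (hsx : s x ≠ 0)
    (hs : HasDerivAt s ((s x - 2 * x * y + 4 * y * U x) / x) x)
    (hU : HasDerivAt U ((U x - 4 * x * y * U x / s x + 4 * y * U x ^ 2 / s x) / x) x) :
    HasDerivAt (fun X => U X * (U X - X) / s X ^ 2) 0 x := by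
  have hquot := (hU.mul (hU.sub (hasDerivAt_id x))).div (hs.pow 2) (pow_ne_zero 2 hsx)
  refine hquot.congr_deriv ?_
  simp only [Pi.mul_apply, Pi.sub_apply, Pi.pow_apply, id]
  field_simp
  ring

theorem stmt6_general (D : Set ℂ) (hD : IsOpen D) (hconn : IsPreconnected D)
    (y s U : ℂ → ℂ)
    (hs : ∀ X ∈ D, s X ≠ 0) (hX : ∀ X ∈ D, X ≠ 0)
    (hsd : ∀ X ∈ D, HasDerivAt s ((s X - 2 * X * y X + 4 * y X * U X) / X) X)
    (hU : ∀ X ∈ D, HasDerivAt U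
      ((U X - 4 * X * y X * U X / s X + 4 * y X * U X ^ 2 / s X) / X) X) :
    ∀ X₁ ∈ D, ∀ X₂ ∈ D,
      U X₁ * (U X₁ - X₁) / s X₁ ^ 2 = U X₂ * (U X₂ - X₂) / s X₂ ^ 2 := by
  have hJ : ∀ X ∈ D, HasDerivAt (fun X => U X * (U X - X) / s X ^ 2) 0 X := fun X hXD =>
    hasDerivAt_mul_sub_div_sq_of_painleveIII (hX X hXD) (hs X hXD) (hsd X hXD) (hU X hXD)
  intro X₁ h₁ X₂ h₂
  exact hD.is_const_of_deriv_eq_zero hconn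
    (fun X hXD => (hJ X hXD).differentiableAt.differentiableWithinAt)
    (fun X hXD => (hJ X hXD).deriv) h₁ h₂

/-- For the system `y′ = −2s`, `Xs′ = s − 2Xy + 4yU`,
`XU′ = U − 4XyU/s + 4yU²/s` (where `s ≠ 0`, `X ≠ 0`), the quantity
`J = U(U − X)/s²` is constant along any solution. -/
theorem stmt6 (D : Set ℂ) (hD : IsOpen D) (hconn : IsPreconnected D)
    (y s U : ℂ → ℂ)
    (hs : ∀ X ∈ D, s X ≠ 0) (hX : ∀ X ∈ D, X ≠ 0)
    (hy : ∀ X ∈ D, HasDerivAt y (-2 * s X) X)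
    (hsd : ∀ X ∈ D, HasDerivAt s ((s X - 2 * X * y X + 4 * y X * U X) / X) X)
    (hU : ∀ X ∈ D, HasDerivAt U
      ((U X - 4 * X * y X * U X / s X + 4 * y X * U X ^ 2 / s X) / X) X) :
    ∀ X₁ ∈ D, ∀ X₂ ∈ D,
      U X₁ * (U X₁ - X₁) / s X₁ ^ 2 = U X₂ * (U X₂ - X₂) / s X₂ ^ 2 :=
  stmt6_general D hD hconn y s U hs hX hsd hU
end

section
/- Let u(X) := −y(X)/s(X) where y, s, U solve the system y′ = −2s, X s′ = s − 2Xy + 4yU, X U′ = U − 4XyU/s + 4yU²/s on a domain where s, u, and X are nonzero. Then u satisfies the Painlevé-III equation u″ = (u′)²/u − u′/X + 4/X + 4u³ − 4/u. -/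
/-!
Along a solution, the quotient rule and `y′ = −2s`, `Xs′ = s − 2Xy + 4yU` express `u′` as the
rational function `2 + y(s − 2Xy + 4yU)/(Xs²)` of `(X, y, s, U)`. Differentiating that once more
and substituting the system again gives `u″` as a rational function of `(X, y, s, U)`, and the
Painlevé-III equation becomes an identity of rational functions, checked by clearing denominators.
-/

section

variable {𝕜 : Type*} [NontriviallyNormedField 𝕜]

def negDivDeriv (X y s U : 𝕜) : 𝕜 :=
  2 + y * (s - 2 * X * y + 4 * y * U) / (X * s ^ 2)

/-- Painlevé III with `(α, β, γ, δ) = (0, 4, 4, −4)` reads `u″ = painleveIIIRhs X u u′`. -/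
def painleveIIIRhs (X u u' : 𝕜) : 𝕜 :=
  u' ^ 2 / u - u' / X + 4 / X + 4 * u ^ 3 - 4 / u

variable {y s U : 𝕜 → 𝕜} {X : 𝕜}

theorem hasDerivAt_neg_div_of_system (hsX : s X ≠ 0) (hX : X ≠ 0)
    (hy : HasDerivAt y (-2 * s X) X)
    (hs : HasDerivAt s ((s X - 2 * X * y X + 4 * y X * U X) / X) X) :
    HasDerivAt (fun Z => -y Z / s Z) (negDivDeriv X (y X) (s X) (U X)) X := by
  refine (hy.neg.div hs hsX).congr_deriv ?_
  unfold negDivDeriv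
  simp only [Pi.neg_apply]
  field_simp
  ring

theorem hasDerivAt_negDivDeriv_of_system (hsX : s X ≠ 0) (hX : X ≠ 0) (hyX : y X ≠ 0)
    (hy : HasDerivAt y (-2 * s X) X)
    (hs : HasDerivAt s ((s X - 2 * X * y X + 4 * y X * U X) / X) X)
    (hU : HasDerivAt U ((U X - 4 * X * y X * U X / s X + 4 * y X * U X ^ 2 / s X) / X) X) :
    HasDerivAt (fun Z => negDivDeriv Z (y Z) (s Z) (U Z))
      (painleveIIIRhs X (-y X / s X) (negDivDeriv X (y X) (s X) (U X))) X := by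
  have hnum := hy.mul ((hs.sub (((hasDerivAt_id X).const_mul 2).mul hy)).add
    ((hy.const_mul 4).mul hU))
  have hden := (hasDerivAt_id X).mul (hs.pow 2)
  refine ((hnum.div hden (by simp [hX, hsX])).const_add 2).congr_deriv ?_
  unfold negDivDeriv painleveIIIRhs
  simp only [Pi.mul_apply, Pi.add_apply, Pi.sub_apply, Pi.pow_apply, id_eq]
  field_simp
  ring

end

/-- If `(y, s, U)` solve `y′ = −2s`, `Xs′ = s − 2Xy + 4yU`,
`XU′ = U − 4XyU/s + 4yU²/s` on a domain where `s`, `X`, and `u := −y/s` are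
nonzero, then `u` satisfies the Painlevé-III equation
`u″ = (u′)²/u − u′/X + 4/X + 4u³ − 4/u`. -/
theorem stmt8 (D : Set ℂ) (hD : IsOpen D) (y s U : ℂ → ℂ)
    (hs : ∀ X ∈ D, s X ≠ 0) (hX : ∀ X ∈ D, X ≠ 0) (hy0 : ∀ X ∈ D, y X ≠ 0)
    (hy : ∀ X ∈ D, HasDerivAt y (-2 * s X) X)
    (hsd : ∀ X ∈ D, HasDerivAt s ((s X - 2 * X * y X + 4 * y X * U X) / X) X)
    (hU : ∀ X ∈ D, HasDerivAt U
      ((U X - 4 * X * y X * U X / s X + 4 * y X * U X ^ 2 / s X) / X) X) :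
    ∀ X ∈ D,
      deriv (deriv (fun Z => -y Z / s Z)) X =
        (deriv (fun Z => -y Z / s Z) X) ^ 2 / (-y X / s X)
          - deriv (fun Z => -y Z / s Z) X / X + 4 / X
          + 4 * (-y X / s X) ^ 3 - 4 / (-y X / s X) := by
  have hu : ∀ Z ∈ D, deriv (fun W => -y W / s W) Z = negDivDeriv Z (y Z) (s Z) (U Z) :=
    fun Z hZ => (hasDerivAt_neg_div_of_system (hs Z hZ) (hX Z hZ) (hy Z hZ) (hsd Z hZ)).deriv
  intro X hXD
  have hu' : deriv (fun W => -y W / s W) =ᶠ[nhds X] fun Z => negDivDeriv Z (y Z) (s Z) (U Z) :=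
    Filter.eventuallyEq_of_mem (hD.mem_nhds hXD) hu
  rw [hu'.deriv_eq, hu X hXD, (hasDerivAt_negDivDeriv_of_system (hs X hXD) (hX X hXD)
    (hy0 X hXD) (hy X hXD) (hsd X hXD) (hU X hXD)).deriv]
  rfl
end

section
/- Suppose u is an analytic solution near X = 0 of the Painlevé-III equation u″ = (u′)²/u − u′/X + 4/X + 4u³ − 4/u with u(0) = 0. Then necessarily u′(0) = 1 and u″(0) = 0, and if u‴(0) = ω then the fifth Taylor coefficient is determined: u⁗⁗(0)/5! coefficient satisfies u(X) = X + ω X³/3! + 40 X⁵/5! + O(X⁷). -/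
/-!
Multiplied by `X u`, the equation becomes the polynomial relation
`X u u″ − X u′² + u u′ − 4u − 4X u⁴ + 4X = 0`. It holds on a punctured neighbourhood of `0`,
because by the identity principle `u` has no zeros there (if `u ≡ 0` the equation reads
`0 = 4/X`), and at `0` itself because `u 0 = 0`; hence all its derivatives vanish at `0`.
By the Leibniz rule those of orders `1, 2, 4, 5` are polynomials in the `u⁽ᵏ⁾(0)` which
successively force `u′(0) = 1`, `u″(0) = 0`, `u⁽⁴⁾(0) = 0` and `12 u⁽⁵⁾(0) = 480`; the one of
order `3` is a multiple of `u′(0) − 1`, which is why `u‴(0)` stays free.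
-/

open Filter Topology

noncomputable def painleveIIICleared (u : ℂ → ℂ) (X : ℂ) : ℂ :=
  X * u X * deriv (deriv u) X - X * deriv u X ^ 2 + u X * deriv u X - 4 * u X
    - 4 * X * u X ^ 4 + 4 * X

lemma eventually_ne_zero_of_painleveIII {u : ℂ → ℂ} (hu : AnalyticAt ℂ u 0)
    (heq : ∀ᶠ X in 𝓝[≠] (0 : ℂ),
      deriv (deriv u) X =
        (deriv u X) ^ 2 / u X - deriv u X / X + 4 / X + 4 * (u X) ^ 3 - 4 / u X) :
    ∀ᶠ X in 𝓝[≠] (0 : ℂ), u X ≠ 0 := by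
  refine hu.eventually_eq_zero_or_eventually_ne_zero.resolve_left fun hzero => ?_
  have hzero' : deriv u =ᶠ[𝓝 0] 0 := by simpa using EventuallyEq.deriv (f := 0) hzero
  have hzero'' : deriv (deriv u) =ᶠ[𝓝 0] 0 := by simpa using hzero'.deriv
  obtain ⟨X, hX, ⟨h, h', h''⟩, hX0⟩ := (heq.and <| ((hzero.and <| hzero'.and hzero'').filter_mono
    nhdsWithin_le_nhds).and self_mem_nhdsWithin).exists
  simp only [h, h', h'', Pi.zero_apply] at hX
  norm_num [eq_comm (a := (0 : ℂ))] at hX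
  exact hX0 hX

lemma painleveIIICleared_eventuallyEq_zero {u : ℂ → ℂ} (hu : AnalyticAt ℂ u 0) (h0 : u 0 = 0)
    (heq : ∀ᶠ X in 𝓝[≠] (0 : ℂ),
      deriv (deriv u) X =
        (deriv u X) ^ 2 / u X - deriv u X / X + 4 / X + 4 * (u X) ^ 3 - 4 / u X) :
    painleveIIICleared u =ᶠ[𝓝 0] 0 := by
  rw [EventuallyEq, ← nhdsNE_sup_pure, eventually_sup, eventually_pure]
  refine ⟨?_, by simp [painleveIIICleared, h0]⟩
  filter_upwards [heq, eventually_ne_zero_of_painleveIII hu heq, self_mem_nhdsWithin]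
    with X hX hu0 (hX0 : X ≠ 0)
  rw [Pi.zero_apply, painleveIIICleared, hX]
  field_simp
  ring

lemma iteratedDeriv_painleveIIICleared_zero {u : ℂ → ℂ} (hu : AnalyticAt ℂ u 0) (h0 : u 0 = 0) :
    iteratedDeriv 1 (painleveIIICleared u) 0 = 4 - 4 * deriv u 0 ∧
    iteratedDeriv 2 (painleveIIICleared u) 0 = (deriv u 0 - 4) * iteratedDeriv 2 u 0 ∧
    iteratedDeriv 4 (painleveIIICleared u) 0 =
      2 * iteratedDeriv 2 u 0 * iteratedDeriv 3 u 0 + (9 * deriv u 0 - 4) * iteratedDeriv 4 u 0 ∧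
    iteratedDeriv 5 (painleveIIICleared u) 0 =
      10 * iteratedDeriv 2 u 0 * iteratedDeriv 4 u 0 + (16 * deriv u 0 - 4) * iteratedDeriv 5 u 0
        - 480 * deriv u 0 ^ 4 := by
  have hu_smooth : ∀ n : ℕ, ContDiffAt ℂ n u 0 := fun n => hu.contDiffAt
  have hu'_smooth : ∀ n : ℕ, ContDiffAt ℂ n (deriv u) 0 := fun n => hu.deriv.contDiffAt
  have hu''_smooth : ∀ n : ℕ, ContDiffAt ℂ n (deriv (deriv u)) 0 :=
    fun n => hu.deriv.deriv.contDiffAt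
  -- `simp` meets the summand `4 * X` in the eta-reduced form `HMul.hMul 4`.
  have hlinear : ∀ n : ℕ, iteratedDeriv n (fun X : ℂ => 4 * X) 0 = if n = 1 then 4 else 0 := by
    intro n
    rw [iteratedDeriv_const_mul_field (4 : ℂ) (fun X => X), iteratedDeriv_fun_id_zero]
    simp
  unfold painleveIIICleared
  simp only [pow_succ, pow_zero, one_mul]
  refine ⟨?_, ?_, ?_, ?_⟩ <;>
  simp (disch := fun_prop) only [iteratedDeriv_fun_mul, iteratedDeriv_fun_add,
    iteratedDeriv_fun_sub, Finset.sum_range_succ, Finset.sum_range_zero, iteratedDeriv_fun_id_zero,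
    iteratedDeriv_const, hlinear] <;>
  norm_num [h0, ← iteratedDeriv_succ', Nat.choose] <;>
  ring

/-- An analytic solution `u` near `X = 0` of the Painlevé-III equation
`u″ = (u′)²/u − u′/X + 4/X + 4u³ − 4/u` with `u(0) = 0` necessarily has
`u′(0) = 1`, `u″(0) = 0`, and Taylor expansion `u(X) = X + ωX³/3! + 40X⁵/5! + O(X⁷)`
(i.e. the fifth derivative at 0 equals `40`). -/
theorem stmt9 (u : ℂ → ℂ) (hu : AnalyticAt ℂ u 0) (h0 : u 0 = 0)
    (heq : ∀ᶠ X in nhdsWithin (0 : ℂ) {(0 : ℂ)}ᶜ,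
      deriv (deriv u) X =
        (deriv u X) ^ 2 / u X - deriv u X / X + 4 / X + 4 * (u X) ^ 3 - 4 / u X) :
    deriv u 0 = 1 ∧ iteratedDeriv 2 u 0 = 0 ∧ iteratedDeriv 5 u 0 = 40 := by
  have hF : ∀ n, iteratedDeriv n (painleveIIICleared u) 0 = 0 := fun n => by
    simp [(painleveIIICleared_eventuallyEq_zero hu h0 heq).iteratedDeriv_eq n]
  obtain ⟨e₁, e₂, e₄, e₅⟩ := iteratedDeriv_painleveIIICleared_zero hu h0
  rw [hF] at e₁ e₂ e₄ e₅
  have d₁ : deriv u 0 = 1 := by linear_combination e₁ / 4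
  have d₂ : iteratedDeriv 2 u 0 = 0 := by rw [d₁] at e₂; linear_combination e₂ / 3
  have d₄ : iteratedDeriv 4 u 0 = 0 := by rw [d₁, d₂] at e₄; linear_combination -e₄ / 5
  refine ⟨d₁, d₂, ?_⟩
  rw [d₁, d₂, d₄] at e₅
  linear_combination -e₅ / 12
end
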